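/- Let q ≥ 2, d ≥ 2, n a positive integer, and suppose V is a positive integer with q^V ≥ (q/(q-1)) · n^{2d} · f_d(V). Then the number of V-boxes unique arrays in Σ_q^{[n]^d} is at least q^(n^d − 1). In particular, for V = 2d log_q(n) + ((d-1)/d) log_q(log_q n) + O(1) and n large enough, red(DA_{d,q}(n,V)) ≤ 1. -/

import Mathlib

/-- A `d`-dimensional box with side lengths `x` is a minimal `V`-box. -/
def IsMinBox (d V : ℕ) (x : Fin d → ℕ) : Prop :=
  (∀ i, 1 ≤ x i) ∧ V ≤ ∏ i, x i ∧
  ∀ y : Fin d → ℕ, (∀ i, 1 ≤ y i) → (∀ i, y i ≤ x i) → y ≠ x → ∏ i, y i < V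

/-- `f_d(V)`, the number of minimal `d`-dimensional `V`-boxes. -/
noncomputable def numMinBoxes (d V : ℕ) : ℕ :=
  Nat.card {x : Fin d → ℕ // IsMinBox d V x}

/-- `W` contains two identical boxes of side lengths `s` at distinct positions
`u, v ∈ ℕ^d`. -/
def identicalBoxesAt (n d q : ℕ) (W : (Fin d → Fin n) → Fin q)
    (u v s : Fin d → ℕ) : Prop :=
  u ≠ v ∧ (∀ i, 1 ≤ s i) ∧ (∀ i, u i + s i ≤ n) ∧ (∀ i, v i + s i ≤ n) ∧
  ∀ (x y : Fin d → Fin n) (off : Fin d → ℕ), (∀ i, off i < s i) →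
    (∀ i, (x i : ℕ) = u i + off i) → (∀ i, (y i : ℕ) = v i + off i) → W x = W y

/-!
Union bound over the triples `(u, v, A)` with `A` a minimal `V`-box. If `W_{u+A} = W_{v+A}` and
`u, v` differ in coordinate `i₀`, say `u i₀ < v i₀`, then each entry of the copy `v + A` equals an
entry further back along `i₀`, so by induction on that coordinate `W` is determined by its values
off `v + A`: at most `q ^ (n^d - |A|) ≤ q ^ (n^d - V)` arrays per triple. There are at most
`n^(2d) f_d(V)` triples, so by the hypothesis at most a fraction `(q - 1)/q` of all arrays is bad.
-/

open Finset

namespace IsMinBox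

variable {d V : ℕ} {x : Fin d → ℕ}

theorem le_max_one (hx : IsMinBox d V x) (i : Fin d) : x i ≤ max V 1 := by
  obtain ⟨hx1, -, hmin⟩ := hx
  by_contra! hlt
  set y := Function.update x i (x i - 1)
  have hy1 : ∀ j, 1 ≤ y j := fun j => by
    rcases eq_or_ne j i with rfl | hj
    · simp only [y, Function.update_self]; omega
    · simpa only [y, Function.update_of_ne hj] using hx1 j
  have hyx : ∀ j, y j ≤ x j := fun j => by
    rcases eq_or_ne j i with rfl | hj
    · simp only [y, Function.update_self]; omega
    · simp only [y, Function.update_of_ne hj, le_refl]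
  have hne : y ≠ x := fun h => by
    have := congrFun h i
    simp only [y, Function.update_self] at this
    omega
  have hyV : V ≤ ∏ j, y j := calc
    V ≤ y i := by simp only [y, Function.update_self]; omega
    _ ≤ ∏ j, y j := single_le_prod' (fun j _ => hy1 j) (mem_univ i)
  exact (hmin y hy1 hyx hne).not_ge hyV

end IsMinBox

theorem finite_setOf_isMinBox (d V : ℕ) : {x : Fin d → ℕ | IsMinBox d V x}.Finite :=
  (Set.finite_Iic fun _ => max V 1).subset fun _ hx i => hx.le_max_one i

theorem exists_isMinBox_le {d V : ℕ} {s : Fin d → ℕ} (hs : ∀ i, 1 ≤ s i)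
    (hsV : V ≤ ∏ i, s i) : ∃ a ≤ s, IsMinBox d V a := by
  set B := {y : Fin d → ℕ | (∀ i, 1 ≤ y i) ∧ V ≤ ∏ i, y i}
  obtain ⟨a, has, ha⟩ := ((Set.finite_Iic s).inter_of_left B).exists_le_minimal
    (show s ∈ Set.Iic s ∩ B from ⟨Set.mem_Iic.2 le_rfl, hs, hsV⟩)
  refine ⟨a, has, ha.prop.2.1, ha.prop.2.2, fun y hy1 hya hne => ?_⟩
  replace hya : y ≤ a := hya
  by_contra! hyV
  exact hne (le_antisymm hya (ha.le_of_le ⟨hya.trans ha.prop.1, hy1, hyV⟩ hya))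

section Counting

variable {X α : Type*} {R : X → X → Prop}

theorem eq_of_eqOn_compl_of_forall_rel {r : X → ℕ} (hr : ∀ x y, R x y → r x < r y)
    {S : Set X} (hS : ∀ y ∈ S, ∃ x, R x y) {W W' : X → α}
    (hW : ∀ x y, R x y → W x = W y) (hW' : ∀ x y, R x y → W' x = W' y)
    (h : ∀ y ∉ S, W y = W' y) : W = W' := by
  funext y
  induction y using (measure r).wf.induction with
  | _ y ih =>
    by_cases hyS : y ∈ S
    · obtain ⟨x, hxy⟩ := hS y hyS
      rw [← hW x y hxy, ← hW' x y hxy]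
      exact ih x (hr x y hxy)
    · exact h y hyS

theorem card_mul_pow_le_of_forall_rel [Fintype X] [Fintype α] {r : X → ℕ}
    (hr : ∀ x y, R x y → r x < r y) {S : Finset X} (hS : ∀ y ∈ S, ∃ x, R x y)
    {s : Finset (X → α)} (hs : ∀ W ∈ s, ∀ x y, R x y → W x = W y) :
    #s * Fintype.card α ^ #S ≤ Fintype.card α ^ Fintype.card X := by
  classical
  have hinj : #s ≤ #(univ : Finset ({y // y ∉ S} → α)) :=
    card_le_card_of_injOn (fun W y => W y) (fun _ _ => mem_univ _)
      fun W hW W' hW' heq => eq_of_eqOn_compl_of_forall_rel hr hS (hs W hW) (hs W' hW')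
        fun y hy => congrFun heq ⟨y, hy⟩
  have hcard : Fintype.card {y // y ∉ S} = Fintype.card X - #S := by
    rw [Fintype.card_subtype_compl, Fintype.card_coe]
  calc #s * Fintype.card α ^ #S
      ≤ Fintype.card α ^ (Fintype.card X - #S) * Fintype.card α ^ #S := by
        rw [card_univ, Fintype.card_fun, hcard] at hinj
        gcongr
    _ = Fintype.card α ^ Fintype.card X := pow_sub_mul_pow _ (card_le_univ S)

end Counting

def IsBoxesUnique (n d q V : ℕ) (W : (Fin d → Fin n) → Fin q) : Prop :=
  ∀ u v s : Fin d → ℕ, V ≤ ∏ i, s i → ¬ identicalBoxesAt n d q W u v s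

namespace identicalBoxesAt

variable {n d q : ℕ} {W : (Fin d → Fin n) → Fin q} {u v s : Fin d → ℕ}

theorem symm (h : identicalBoxesAt n d q W u v s) : identicalBoxesAt n d q W v u s :=
  let ⟨hne, hs, hu, hv, hW⟩ := h
  ⟨hne.symm, hs, hv, hu, fun x y off hoff hx hy => (hW y x off hoff hy hx).symm⟩

theorem mono {a : Fin d → ℕ} (h : identicalBoxesAt n d q W u v s) (ha : ∀ i, 1 ≤ a i)
    (has : a ≤ s) : identicalBoxesAt n d q W u v a :=
  let ⟨hne, _, hu, hv, hW⟩ := h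
  ⟨hne, ha, fun i => (Nat.add_le_add_left (has i) _).trans (hu i),
    fun i => (Nat.add_le_add_left (has i) _).trans (hv i),
    fun x y off hoff => hW x y off fun i => (hoff i).trans_le (has i)⟩

end identicalBoxesAt

section Arrays

variable {n d q : ℕ}

theorem card_mul_pow_le_of_identicalBoxesAt {u v a : Fin d → ℕ}
    {s : Finset ((Fin d → Fin n) → Fin q)} (hs : ∀ W ∈ s, identicalBoxesAt n d q W u v a) :
    #s * q ^ ∏ i, a i ≤ q ^ n ^ d := by
  rcases s.eq_empty_or_nonempty with rfl | ⟨W₀, hW₀⟩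
  · simp
  obtain ⟨hne, -, hu, hv, -⟩ := hs W₀ hW₀
  obtain ⟨i₀, hi₀⟩ := Function.ne_iff.mp hne
  wlog hlt : u i₀ < v i₀ generalizing u v
  · exact this (fun W hW => (hs W hW).symm) hne.symm hv hu hi₀.symm (by omega)
  let R : (Fin d → Fin n) → (Fin d → Fin n) → Prop := fun x y =>
    ∃ off : Fin d → ℕ, (∀ i, off i < a i) ∧ (∀ i, (x i : ℕ) = u i + off i) ∧
      ∀ i, (y i : ℕ) = v i + off i
  let box : Finset (Fin d → Fin n) := Fintype.piFinset fun i =>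
    (Ico (v i) (v i + a i)).attachFin fun m hm => by
      have := hv i
      rw [mem_Ico] at hm
      omega
  have hbox : #box = ∏ i, a i := by simp [box, Fintype.card_piFinset]
  have hpred : ∀ y ∈ box, ∃ x, R x y := by
    intro y hy
    simp only [box, Fintype.mem_piFinset, mem_attachFin, mem_Ico] at hy
    exact ⟨fun i => ⟨u i + (y i - v i), by have := hu i; have := hy i; omega⟩,
      fun i => y i - v i, fun i => by dsimp only; have := hy i; omega, fun i => rfl,
      fun i => by dsimp only; have := hy i; omega⟩
  have hrank : ∀ x y, R x y → (x i₀ : ℕ) < y i₀ := by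
    rintro x y ⟨off, -, hx, hy⟩
    rw [hx, hy]
    omega
  simpa [hbox] using card_mul_pow_le_of_forall_rel hrank hpred
    fun W hW x y ⟨off, hoff, hx, hy⟩ => (hs W hW).2.2.2.2 x y off hoff hx hy

theorem exists_isMinBox_of_not_isBoxesUnique {V : ℕ} {W : (Fin d → Fin n) → Fin q}
    (h : ¬ IsBoxesUnique n d q V W) :
    ∃ (u v : Fin d → Fin n) (a : Fin d → ℕ),
      IsMinBox d V a ∧ identicalBoxesAt n d q W (fun i => u i) (fun i => v i) a := by
  simp only [IsBoxesUnique, not_forall, not_not] at h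
  obtain ⟨u, v, s, hsV, hid⟩ := h
  obtain ⟨a, has, ha⟩ := exists_isMinBox_le hid.2.1 hsV
  obtain ⟨hne, ha1, hu, hv, hW⟩ := hid.mono ha.1 has
  exact ⟨fun i => ⟨u i, by have := hu i; have := ha1 i; omega⟩,
    fun i => ⟨v i, by have := hv i; have := ha1 i; omega⟩, a, ha, hne, ha1, hu, hv, hW⟩

open Classical in
theorem card_filter_not_isBoxesUnique_mul_pow_le (hq : 0 < q) (V : ℕ) :
    #{W : (Fin d → Fin n) → Fin q | ¬ IsBoxesUnique n d q V W} * q ^ V ≤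
      n ^ (2 * d) * numMinBoxes d V * q ^ n ^ d := by
  set F := (finite_setOf_isMinBox d V).toFinset
  set T := (univ : Finset (Fin d → Fin n)) ×ˢ (univ : Finset (Fin d → Fin n)) ×ˢ F
  let E : (Fin d → Fin n) × (Fin d → Fin n) × (Fin d → ℕ) → Finset ((Fin d → Fin n) → Fin q) :=
    fun t => {W | identicalBoxesAt n d q W (fun i => t.1 i) (fun i => t.2.1 i) t.2.2}
  have hcover : univ.filter (fun W => ¬ IsBoxesUnique n d q V W) ⊆ T.biUnion E := by
    intro W hW
    obtain ⟨u, v, a, ha, hid⟩ := exists_isMinBox_of_not_isBoxesUnique (mem_filter.1 hW).2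
    exact mem_biUnion.2 ⟨(u, v, a), by simpa [T, F] using ha, by simpa [E] using hid⟩
  have hE : ∀ t ∈ T, #(E t) * q ^ V ≤ q ^ n ^ d := by
    rintro ⟨u, v, a⟩ ht
    have ha : IsMinBox d V a := by simpa [T, F] using ht
    calc #(E (u, v, a)) * q ^ V ≤ #(E (u, v, a)) * q ^ ∏ i, a i := 
          Nat.mul_le_mul_left _ (Nat.pow_le_pow_right hq ha.2.1)
      _ ≤ q ^ n ^ d := card_mul_pow_le_of_identicalBoxesAt fun W hW => by simpa [E] using hW
  have hF : #F = numMinBoxes d V := (Nat.card_eq_card_finite_toFinset _).symm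
  have hT : #T = n ^ (2 * d) * numMinBoxes d V := by
    rw [card_product, card_product, card_univ, Fintype.card_fun, Fintype.card_fin,
      Fintype.card_fin, hF]
    ring
  calc _ ≤ (∑ t ∈ T, #(E t)) * q ^ V := by
        gcongr
        exact (card_le_card hcover).trans card_biUnion_le
    _ = ∑ t ∈ T, #(E t) * q ^ V := sum_mul ..
    _ ≤ #T * q ^ n ^ d := sum_le_card_nsmul _ _ _ hE
    _ = _ := by rw [hT]

end Arrays

theorem pow_pred_le_of_add_eq_pow {q N good bad m V : ℕ} (hq : 0 < q) (hN : 1 ≤ N)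
    (hsum : good + bad = q ^ N) (hbad : bad * q ^ V ≤ m * q ^ N)
    (hm : q * m ≤ (q - 1) * q ^ V) : q ^ (N - 1) ≤ good := by
  have hbad' : bad * q ≤ (q - 1) * q ^ N := by
    refine Nat.le_of_mul_le_mul_right ?_ (pow_pos hq V)
    calc bad * q * q ^ V = q * (bad * q ^ V) := by ring
      _ ≤ q * (m * q ^ N) := Nat.mul_le_mul_left _ hbad
      _ = q * m * q ^ N := by ring
      _ ≤ (q - 1) * q ^ V * q ^ N := Nat.mul_le_mul_right _ hm
      _ = (q - 1) * q ^ N * q ^ V := by ring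
  have hpow : q ^ N = q ^ (N - 1) * q := by rw [← pow_succ]; congr 1; omega
  refine Nat.le_of_mul_le_mul_right ?_ hq
  have hq' : ((q - 1 : ℕ) : ℤ) = q - 1 := by push_cast [Nat.cast_sub hq]; ring
  zify at hsum hbad' hpow ⊢
  rw [hq'] at hbad'
  nlinarith

theorem stmt12_general (q n d V : ℕ) (hq : 2 ≤ q) (hn : 1 ≤ n)
    (hbound : ((q : ℝ) / ((q : ℝ) - 1)) * (n : ℝ) ^ (2 * d) * (numMinBoxes d V : ℝ)
        ≤ (q : ℝ) ^ V) :
    q ^ (n ^ d - 1) ≤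
      Nat.card {W : (Fin d → Fin n) → Fin q //
        ∀ u v s : Fin d → ℕ, V ≤ ∏ i, s i → ¬ identicalBoxesAt n d q W u v s} := by
  classical
  have hm : q * (n ^ (2 * d) * numMinBoxes d V) ≤ (q - 1) * q ^ V := by
    have hq1 : (1 : ℝ) < q := by exact_mod_cast hq
    rw [div_mul_eq_mul_div, div_mul_eq_mul_div, div_le_iff₀ (by linarith)] at hbound
    exact_mod_cast (by push_cast [Nat.cast_sub (by omega : 1 ≤ q)]; linarith :
      (q : ℝ) * (n ^ (2 * d) * numMinBoxes d V) ≤ ((q - 1 : ℕ) : ℝ) * q ^ V)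
  change q ^ (n ^ d - 1) ≤ Nat.card {W // IsBoxesUnique n d q V W}
  rw [Nat.card_eq_fintype_card, Fintype.card_subtype]
  refine pow_pred_le_of_add_eq_pow (by omega) (Nat.one_le_pow _ _ hn) ?_
    (card_filter_not_isBoxesUnique_mul_pow_le (by omega) V) hm
  rw [card_filter_add_card_filter_not, card_univ, Fintype.card_fun, Fintype.card_fun,
    Fintype.card_fin, Fintype.card_fin, Fintype.card_fin]

theorem stmt12 (q n d V : ℕ) (hq : 2 ≤ q) (hn : 1 ≤ n) (hd : 2 ≤ d) (hV : 1 ≤ V)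
    (hbound : ((q : ℝ) / ((q : ℝ) - 1)) * (n : ℝ) ^ (2 * d) * (numMinBoxes d V : ℝ)
        ≤ (q : ℝ) ^ V) :
    q ^ (n ^ d - 1) ≤
      Nat.card {W : (Fin d → Fin n) → Fin q //
        ∀ u v s : Fin d → ℕ, V ≤ ∏ i, s i → ¬ identicalBoxesAt n d q W u v s} :=
  stmt12_general q n d V hq hn hbound
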